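/- arXiv:2310.04251 — 4 statements merged into one kernel-verified Lean document; each statement's English description precedes it below -/
import Mathlib

section
/- Let O be a simplicial right brace algebra with coboundary d(p) = m ∘ p + Σ_{i=1}^{|p|+1} (−1)^i D_i(p) and boundary ∂(p) = Σ_{i=1}^{n} (−1)^i p ∘_i 1₀ for p ∈ O(n). Then d and ∂ anticommute: ∂ ∘ d = − d ∘ ∂, and hence (O, ∂, d) is a bicomplex with total differential D = d + ∂. -/
/-!
Write `Fⱼ p = p ∘ⱼ 1₀` and `Dᵢ p = p ∘ᵢ m`. Expanding `∂ (d p)` produces faces of `m ∘₁ p`,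
`m ∘₂ p` and of the degeneracies `Dᵢ p`. The two associativity axioms give the simplicial
identities `Fⱼ (m ∘₁ p) = m ∘₁ Fⱼ p`, `Fⱼ₊₁ (m ∘₂ p) = m ∘₂ Fⱼ p`, `Fⱼ Dᵢ₊₁ p = Dᵢ Fⱼ p` (`j ≤ i`)
and `Fₖ₊₁ Dᵢ p = Dᵢ Fₖ p` (`i < k`); summed with their signs, the right-hand sides give exactly
`-d (∂ p)`, because in each identity either an index or the arity in the sign of `m{p}`
drops by one. The remaining faces
`Fₙ₊₁ (m ∘₁ p)`, `F₁ (m ∘₂ p)`, `Fᵢ Dᵢ p` and `Fᵢ₊₁ Dᵢ p` all equal `p` by the unit conditions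
`m ∘₁ 1₀ = 1_O = m ∘₂ 1₀`, and cancel in pairs.
-/

open scoped BigOperators TensorProduct

/-- A (connected, unitary, multiplicative) operad in `K`-vector spaces, presented via
partial compositions `∘ᵢ : O(p) ⊗ O(q) → O(p+q-1)`, with unit `1_O ∈ O(1)`,
distinguished element `1₀ ∈ O(0)` (connectedness: `O(0) ≅ K` with basis `1₀`),
and a multiplication `m ∈ O(2)` with `m ∘₁ m = m ∘₂ m`. -/
structure POperad (K : Type) [Field K] where
  O : ℕ → Type
  [acg : ∀ n, AddCommGroup (O n)]
  [mod : ∀ n, Module K (O n)]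
  comp : ∀ {p q : ℕ}, O p → O q → ℕ → O (p + q - 1)
  one0 : O 0
  one1 : O 1
  mul : O 2
  comp_add_left : ∀ {p q : ℕ} (x x' : O p) (y : O q) (i : ℕ),
    comp (x + x') y i = comp x y i + comp x' y i
  comp_add_right : ∀ {p q : ℕ} (x : O p) (y y' : O q) (i : ℕ),
    comp x (y + y') i = comp x y i + comp x y' i
  comp_smul_left : ∀ {p q : ℕ} (c : K) (x : O p) (y : O q) (i : ℕ),
    comp (c • x) y i = c • comp x y i
  comp_smul_right : ∀ {p q : ℕ} (c : K) (x : O p) (y : O q) (i : ℕ),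
    comp x (c • y) i = c • comp x y i
  comp_one_right : ∀ {p : ℕ} (x : O p) (i : ℕ), 1 ≤ i → i ≤ p → HEq (comp x one1 i) x
  comp_one_left : ∀ {q : ℕ} (y : O q), HEq (comp one1 y 1) y
  mul_mul : comp mul mul 1 = comp mul mul 2
  assoc_seq : ∀ {p q r : ℕ} (x : O p) (y : O q) (z : O r) (i j : ℕ),
    1 ≤ i → i ≤ p → 1 ≤ j → j ≤ q →
    HEq (comp (comp x y i) z (j + i - 1)) (comp x (comp y z j) i)
  assoc_par : ∀ {p q r : ℕ} (x : O p) (y : O q) (z : O r) (i j : ℕ),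
    1 ≤ i → i < j → j ≤ p →
    HEq (comp (comp x y i) z (j + q - 1)) (comp (comp x z j) y i)

attribute [instance] POperad.acg POperad.mod

/-- Cast along an equality of arities. -/
def POperad.pcast {K : Type} [Field K] (𝒪 : POperad K) {a b : ℕ} (h : a = b) (x : 𝒪.O a) :
    𝒪.O b := h ▸ x

/-- The simplicial boundary `∂(p) = Σ_{i=1}^n (-1)^i p ∘ᵢ 1₀`. -/
noncomputable def POperad.del {K : Type} [Field K] (𝒪 : POperad K) {n : ℕ}
    (p : 𝒪.O n) : 𝒪.O (n - 1) :=
  ∑ i ∈ Finset.Icc 1 n, ((-1 : ℤ) ^ i) • 𝒪.comp p 𝒪.one0 i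

/-- The coboundary `d(p) = m ∘ p + Σ_{i=1}^{|p|+1} (-1)^i Dᵢ(p)`, where
`m ∘ p = m{p} = (-1)^{|p|} (m ∘₁ p) + m ∘₂ p` and `Dᵢ(p) = p ∘ᵢ m`. -/
noncomputable def POperad.dd {K : Type} [Field K] (𝒪 : POperad K) {n : ℕ}
    (p : 𝒪.O n) : 𝒪.O (n + 1) :=
  ((-1 : ℤ) ^ (n + 1)) • 𝒪.pcast (by omega) (𝒪.comp 𝒪.mul p 1)
    + 𝒪.pcast (by omega) (𝒪.comp 𝒪.mul p 2)
    + ∑ i ∈ Finset.Icc 1 n, ((-1 : ℤ) ^ i) • 𝒪.comp p 𝒪.mul i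

lemma Finset.sum_Icc_one_eq_sum_range {M : Type*} [AddCommMonoid M] (f : ℕ → M) (n : ℕ) :
    ∑ i ∈ Finset.Icc 1 n, f i = ∑ i ∈ Finset.range n, f (i + 1) := by
  rw [← Finset.Ico_add_one_right_eq_Icc, Finset.sum_Ico_eq_sum_range]
  simp only [Nat.add_sub_cancel, Nat.add_comm 1]

-- The shape of `Σᵢ (-1)ⁱ ∂ (p ∘ᵢ m)` given by `POperad.del_degen`, with `f k i = (p ∘ₖ₊₁ 1₀) ∘ᵢ m`.
lemma Finset.sum_range_neg_one_pow_smul_sub {G : Type*} [AddCommGroup G] (f : ℕ → ℕ → G)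
    (n : ℕ) :
    ∑ i ∈ Finset.range (n + 1), (-1 : ℤ) ^ (i + 1) •
        (∑ j ∈ Finset.range i, (-1 : ℤ) ^ (j + 1) • f j i
          - ∑ k ∈ Finset.Ico (i + 1) (n + 1), (-1 : ℤ) ^ (k + 1) • f k (i + 1))
      = -∑ i ∈ Finset.range n, (-1 : ℤ) ^ (i + 1) •
          ∑ k ∈ Finset.range (n + 1), (-1 : ℤ) ^ (k + 1) • f k (i + 1) := by
  have split : ∀ i ∈ Finset.range n,
      ∑ k ∈ Finset.range (n + 1), (-1 : ℤ) ^ (k + 1) • f k (i + 1)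
        = ∑ k ∈ Finset.range (i + 1), (-1 : ℤ) ^ (k + 1) • f k (i + 1)
          + ∑ k ∈ Finset.Ico (i + 1) (n + 1), (-1 : ℤ) ^ (k + 1) • f k (i + 1) := fun i hi =>
    (Finset.sum_range_add_sum_Ico _ (by simp at hi; omega)).symm
  rw [Finset.sum_congr rfl fun i hi => congrArg _ (split i hi)]
  simp only [smul_sub, Finset.sum_sub_distrib]
  rw [Finset.sum_range_succ', Finset.sum_range_succ _ n]
  have sign : ∀ k : ℕ, (-1 : ℤ) ^ (k + 1 + 1) = -(-1) ^ (k + 1) := fun k => by ring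
  simp only [Finset.range_zero, Finset.sum_empty, smul_zero, Finset.Ico_self, add_zero, sign,
    neg_smul, smul_add, Finset.sum_add_distrib, Finset.sum_neg_distrib]
  abel

namespace POperad

variable {K : Type} [Field K] (𝒪 : POperad K)

section Cast

@[simp] lemma pcast_pcast {a b c : ℕ} (h : a = b) (h' : b = c) (x : 𝒪.O a) :
    𝒪.pcast h' (𝒪.pcast h x) = 𝒪.pcast (h.trans h') x := by subst h; rfl

lemma pcast_add {a b : ℕ} (h : a = b) (x y : 𝒪.O a) :
    𝒪.pcast h (x + y) = 𝒪.pcast h x + 𝒪.pcast h y := by subst h; rfl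

lemma pcast_neg {a b : ℕ} (h : a = b) (x : 𝒪.O a) : 𝒪.pcast h (-x) = -𝒪.pcast h x := by
  subst h; rfl

lemma pcast_sub {a b : ℕ} (h : a = b) (x y : 𝒪.O a) :
    𝒪.pcast h (x - y) = 𝒪.pcast h x - 𝒪.pcast h y := by subst h; rfl

lemma pcast_zsmul {a b : ℕ} (h : a = b) (z : ℤ) (x : 𝒪.O a) :
    𝒪.pcast h (z • x) = z • 𝒪.pcast h x := by subst h; rfl

lemma pcast_sum {ι : Type} (s : Finset ι) {a b : ℕ} (h : a = b) (f : ι → 𝒪.O a) :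
    𝒪.pcast h (∑ i ∈ s, f i) = ∑ i ∈ s, 𝒪.pcast h (f i) := by subst h; rfl

lemma eq_pcast_of_heq {a b : ℕ} (h : a = b) {x : 𝒪.O a} {y : 𝒪.O b} (hyx : HEq y x) :
    y = 𝒪.pcast h x := by subst h; exact eq_of_heq hyx

end Cast

section Linearity

def compLeftHom {p q : ℕ} (y : 𝒪.O q) (i : ℕ) : 𝒪.O p →+ 𝒪.O (p + q - 1) :=
  AddMonoidHom.mk' (fun x => 𝒪.comp x y i) fun a b => 𝒪.comp_add_left a b y i

def compRightHom {p q : ℕ} (x : 𝒪.O p) (i : ℕ) : 𝒪.O q →+ 𝒪.O (p + q - 1) :=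
  AddMonoidHom.mk' (fun y => 𝒪.comp x y i) fun a b => 𝒪.comp_add_right x a b i

lemma comp_zsmul_left {p q : ℕ} (z : ℤ) (x : 𝒪.O p) (y : 𝒪.O q) (i : ℕ) :
    𝒪.comp (z • x) y i = z • 𝒪.comp x y i := map_zsmul (𝒪.compLeftHom y i) z x

lemma comp_zsmul_right {p q : ℕ} (z : ℤ) (x : 𝒪.O p) (y : 𝒪.O q) (i : ℕ) :
    𝒪.comp x (z • y) i = z • 𝒪.comp x y i := map_zsmul (𝒪.compRightHom x i) z y

lemma comp_sum_left {ι : Type} (s : Finset ι) {p q : ℕ} (f : ι → 𝒪.O p) (y : 𝒪.O q)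
    (i : ℕ) : 𝒪.comp (∑ j ∈ s, f j) y i = ∑ j ∈ s, 𝒪.comp (f j) y i :=
  map_sum (𝒪.compLeftHom y i) f s

lemma comp_sum_right {ι : Type} (s : Finset ι) {p q : ℕ} (x : 𝒪.O p) (f : ι → 𝒪.O q)
    (i : ℕ) : 𝒪.comp x (∑ j ∈ s, f j) i = ∑ j ∈ s, 𝒪.comp x (f j) i :=
  map_sum (𝒪.compRightHom x i) f s

lemma del_add {n : ℕ} (x y : 𝒪.O n) : 𝒪.del (x + y) = 𝒪.del x + 𝒪.del y := by
  simp only [del, comp_add_left, smul_add, Finset.sum_add_distrib]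

noncomputable def delHom (n : ℕ) : 𝒪.O n →+ 𝒪.O (n - 1) :=
  AddMonoidHom.mk' 𝒪.del 𝒪.del_add

lemma del_zsmul {n : ℕ} (z : ℤ) (x : 𝒪.O n) : 𝒪.del (z • x) = z • 𝒪.del x :=
  map_zsmul (𝒪.delHom n) z x

lemma del_sum {ι : Type} (s : Finset ι) {n : ℕ} (f : ι → 𝒪.O n) :
    𝒪.del (∑ j ∈ s, f j) = ∑ j ∈ s, 𝒪.del (f j) :=
  map_sum (𝒪.delHom n) f s

lemma del_pcast {a b : ℕ} (h : a = b) (x : 𝒪.O a) :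
    𝒪.del (𝒪.pcast h x) = 𝒪.pcast (by rw [h]) (𝒪.del x) := by subst h; rfl

end Linearity

section SimplicialIdentities

variable {n : ℕ}

lemma face_last_mul_comp_one (hm2 : 𝒪.comp 𝒪.mul 𝒪.one0 2 = 𝒪.one1) (p : 𝒪.O n) :
    𝒪.comp (𝒪.comp 𝒪.mul p 1) 𝒪.one0 (n + 1) = 𝒪.pcast (by omega) p := by
  refine 𝒪.eq_pcast_of_heq _ ?_
  have h := 𝒪.assoc_par 𝒪.mul p 𝒪.one0 1 2 le_rfl one_lt_two le_rfl
  rw [hm2] at h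
  rw [show n + 1 = 2 + n - 1 by omega]
  exact h.trans (𝒪.comp_one_left p)

lemma face_mul_comp_one (p : 𝒪.O n) {j : ℕ} (hj₁ : 1 ≤ j) (hj : j ≤ n) :
    𝒪.comp (𝒪.comp 𝒪.mul p 1) 𝒪.one0 j
      = 𝒪.pcast (by omega) (𝒪.comp 𝒪.mul (𝒪.comp p 𝒪.one0 j) 1) := by
  refine 𝒪.eq_pcast_of_heq _ ?_
  have h := 𝒪.assoc_seq 𝒪.mul p 𝒪.one0 1 j le_rfl one_le_two hj₁ hj
  rwa [Nat.add_sub_cancel] at h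

lemma face_one_mul_comp_two (hm1 : 𝒪.comp 𝒪.mul 𝒪.one0 1 = 𝒪.one1) (p : 𝒪.O n) :
    𝒪.comp (𝒪.comp 𝒪.mul p 2) 𝒪.one0 1 = 𝒪.pcast (by omega) p := by
  refine 𝒪.eq_pcast_of_heq _ ?_
  have h := 𝒪.assoc_par 𝒪.mul 𝒪.one0 p 1 2 le_rfl one_lt_two le_rfl
  rw [hm1] at h
  exact h.symm.trans (𝒪.comp_one_left p)

lemma face_succ_mul_comp_two (p : 𝒪.O n) {j : ℕ} (hj₁ : 1 ≤ j) (hj : j ≤ n) :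
    𝒪.comp (𝒪.comp 𝒪.mul p 2) 𝒪.one0 (j + 1)
      = 𝒪.pcast (by omega) (𝒪.comp 𝒪.mul (𝒪.comp p 𝒪.one0 j) 2) := by
  refine 𝒪.eq_pcast_of_heq _ ?_
  have h := 𝒪.assoc_seq 𝒪.mul p 𝒪.one0 2 j one_le_two le_rfl hj₁ hj
  rwa [show j + 2 - 1 = j + 1 by omega] at h

lemma face_degen_self (hm1 : 𝒪.comp 𝒪.mul 𝒪.one0 1 = 𝒪.one1) (p : 𝒪.O n) {i : ℕ}
    (hi₁ : 1 ≤ i) (hi : i ≤ n) :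
    𝒪.comp (𝒪.comp p 𝒪.mul i) 𝒪.one0 i = 𝒪.pcast (by omega) p := by
  refine 𝒪.eq_pcast_of_heq _ ?_
  have h := 𝒪.assoc_seq p 𝒪.mul 𝒪.one0 i 1 hi₁ hi le_rfl one_le_two
  rw [Nat.add_sub_cancel_left, hm1] at h
  exact h.trans (𝒪.comp_one_right p i hi₁ hi)

lemma face_succ_degen_self (hm2 : 𝒪.comp 𝒪.mul 𝒪.one0 2 = 𝒪.one1) (p : 𝒪.O n) {i : ℕ}
    (hi₁ : 1 ≤ i) (hi : i ≤ n) :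
    𝒪.comp (𝒪.comp p 𝒪.mul i) 𝒪.one0 (i + 1) = 𝒪.pcast (by omega) p := by
  refine 𝒪.eq_pcast_of_heq _ ?_
  have h := 𝒪.assoc_seq p 𝒪.mul 𝒪.one0 i 2 hi₁ hi one_le_two le_rfl
  rw [show 2 + i - 1 = i + 1 by omega, hm2] at h
  exact h.trans (𝒪.comp_one_right p i hi₁ hi)

lemma face_degen_of_le (p : 𝒪.O n) {i j : ℕ} (hj₁ : 1 ≤ j) (hji : j ≤ i) (hi : i < n) :
    𝒪.comp (𝒪.comp p 𝒪.mul (i + 1)) 𝒪.one0 j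
      = 𝒪.pcast (by omega) (𝒪.comp (𝒪.comp p 𝒪.one0 j) 𝒪.mul i) := by
  refine 𝒪.eq_pcast_of_heq _ ?_
  have h := 𝒪.assoc_par p 𝒪.one0 𝒪.mul j (i + 1) hj₁ (by omega) (by omega)
  rw [show i + 1 + 0 - 1 = i by omega] at h
  exact h.symm

lemma face_succ_degen_of_lt (p : 𝒪.O n) {i k : ℕ} (hi₁ : 1 ≤ i) (hik : i < k)
    (hk : k ≤ n) :
    𝒪.comp (𝒪.comp p 𝒪.mul i) 𝒪.one0 (k + 1)
      = 𝒪.pcast (by omega) (𝒪.comp (𝒪.comp p 𝒪.one0 k) 𝒪.mul i) := by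
  refine 𝒪.eq_pcast_of_heq _ ?_
  have h := 𝒪.assoc_par p 𝒪.mul 𝒪.one0 i k hi₁ hik hk
  rwa [show k + 2 - 1 = k + 1 by omega] at h

end SimplicialIdentities

section Boundary

variable {n : ℕ}

lemma del_eq_sum_range (x : 𝒪.O n) :
    𝒪.del x = ∑ j ∈ Finset.range n, (-1 : ℤ) ^ (j + 1) • 𝒪.comp x 𝒪.one0 (j + 1) :=
  Finset.sum_Icc_one_eq_sum_range _ n

lemma del_mul_comp_one (hm2 : 𝒪.comp 𝒪.mul 𝒪.one0 2 = 𝒪.one1) (p : 𝒪.O (n + 1)) :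
    𝒪.del (𝒪.comp 𝒪.mul p 1)
      = 𝒪.pcast (by omega) (𝒪.comp 𝒪.mul (𝒪.del p) 1)
        + (-1 : ℤ) ^ (n + 2) • 𝒪.pcast (by omega) p := by
  rw [del_eq_sum_range, show Finset.range (2 + (n + 1) - 1) = Finset.range (n + 1 + 1) by
      congr 1; omega, Finset.sum_range_succ, face_last_mul_comp_one _ hm2, del_eq_sum_range,
    comp_sum_right, pcast_sum]
  congr 1
  refine Finset.sum_congr rfl fun j hj => ?_
  rw [face_mul_comp_one _ p (by omega) (by simp at hj; omega), comp_zsmul_right, pcast_zsmul]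

lemma del_mul_comp_two (hm1 : 𝒪.comp 𝒪.mul 𝒪.one0 1 = 𝒪.one1) (p : 𝒪.O (n + 1)) :
    𝒪.del (𝒪.comp 𝒪.mul p 2)
      = -𝒪.pcast (by omega) (𝒪.comp 𝒪.mul (𝒪.del p) 2) - 𝒪.pcast (by omega) p := by
  rw [del_eq_sum_range, show Finset.range (2 + (n + 1) - 1) = Finset.range (n + 1 + 1) by
      congr 1; omega, Finset.sum_range_succ', face_one_mul_comp_two _ hm1, del_eq_sum_range,
    comp_sum_right, pcast_sum, ← Finset.sum_neg_distrib, sub_eq_add_neg, pow_one, neg_one_smul]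
  congr 1
  refine Finset.sum_congr rfl fun j hj => ?_
  rw [face_succ_mul_comp_two _ p (by omega) (by simp at hj; omega), comp_zsmul_right,
    pcast_zsmul, pow_succ, mul_neg_one, neg_smul]

lemma del_degen (hm1 : 𝒪.comp 𝒪.mul 𝒪.one0 1 = 𝒪.one1)
    (hm2 : 𝒪.comp 𝒪.mul 𝒪.one0 2 = 𝒪.one1) (p : 𝒪.O (n + 1)) {i : ℕ} (hi : i < n + 1) :
    𝒪.del (𝒪.comp p 𝒪.mul (i + 1))
      = ∑ j ∈ Finset.range i, (-1 : ℤ) ^ (j + 1) •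
          𝒪.pcast (by omega) (𝒪.comp (𝒪.comp p 𝒪.one0 (j + 1)) 𝒪.mul i)
        - ∑ k ∈ Finset.Ico (i + 1) (n + 1), (-1 : ℤ) ^ (k + 1) •
          𝒪.pcast (by omega) (𝒪.comp (𝒪.comp p 𝒪.one0 (k + 1)) 𝒪.mul (i + 1)) := by
  rw [del_eq_sum_range, show Finset.range (n + 1 + 2 - 1) = Finset.range (n + 1 + 1) from rfl,
    ← Finset.sum_range_add_sum_Ico _ (show i ≤ n + 1 + 1 by omega),
    ← Finset.sum_Ico_consecutive _ (show i ≤ i + 1 + 1 by omega)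
      (show i + 1 + 1 ≤ n + 1 + 1 by omega),
    Finset.sum_Ico_succ_top (show i ≤ i + 1 by omega), Finset.sum_Ico_succ_top le_rfl,
    Finset.Ico_self, Finset.sum_empty, zero_add,
    face_degen_self _ hm1 p (by omega) (by omega),
    face_succ_degen_self _ hm2 p (by omega) (by omega),
    pow_succ (-1 : ℤ) (i + 1), mul_neg_one, neg_smul, add_neg_cancel, zero_add,
    ← Finset.sum_Ico_add' _ (i + 1) (n + 1) 1, sub_eq_add_neg, ← Finset.sum_neg_distrib]
  congr 1
  · refine Finset.sum_congr rfl fun j hj => ?_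
    rw [face_degen_of_le _ p (by omega) (by simp at hj; omega) hi]
  · refine Finset.sum_congr rfl fun k hk => ?_
    rw [Finset.mem_Ico] at hk
    rw [face_succ_degen_of_lt _ p (by omega) (by omega) (by omega), pow_succ, mul_neg_one,
      neg_smul]

lemma sum_del_degen (hm1 : 𝒪.comp 𝒪.mul 𝒪.one0 1 = 𝒪.one1)
    (hm2 : 𝒪.comp 𝒪.mul 𝒪.one0 2 = 𝒪.one1) (p : 𝒪.O (n + 1)) :
    ∑ i ∈ Finset.Icc 1 (n + 1), (-1 : ℤ) ^ i • 𝒪.del (𝒪.comp p 𝒪.mul i)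
      = -𝒪.pcast (by omega)
          (∑ i ∈ Finset.Icc 1 (n + 1 - 1), (-1 : ℤ) ^ i • 𝒪.comp (𝒪.del p) 𝒪.mul i) := by
  let f : ℕ → ℕ → 𝒪.O (n + 1 + 2 - 1 - 1) := fun k i =>
    𝒪.pcast (by omega) (𝒪.comp (𝒪.comp p 𝒪.one0 (k + 1)) 𝒪.mul i)
  calc ∑ i ∈ Finset.Icc 1 (n + 1), (-1 : ℤ) ^ i • 𝒪.del (𝒪.comp p 𝒪.mul i)
      = ∑ i ∈ Finset.range (n + 1), (-1 : ℤ) ^ (i + 1) •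
          (∑ j ∈ Finset.range i, (-1 : ℤ) ^ (j + 1) • f j i
            - ∑ k ∈ Finset.Ico (i + 1) (n + 1), (-1 : ℤ) ^ (k + 1) • f k (i + 1)) := by
        rw [Finset.sum_Icc_one_eq_sum_range]
        exact Finset.sum_congr rfl fun i hi => by
          rw [del_degen _ hm1 hm2 p (Finset.mem_range.mp hi)]
    _ = -∑ i ∈ Finset.range n, (-1 : ℤ) ^ (i + 1) •
          ∑ k ∈ Finset.range (n + 1), (-1 : ℤ) ^ (k + 1) • f k (i + 1) :=
        Finset.sum_range_neg_one_pow_smul_sub f n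
    _ = _ := by
        rw [Finset.sum_Icc_one_eq_sum_range]
        simp only [f, del_eq_sum_range, comp_sum_left, comp_zsmul_left, pcast_sum, pcast_zsmul]
        rfl

lemma del_dd (hm1 : 𝒪.comp 𝒪.mul 𝒪.one0 1 = 𝒪.one1)
    (hm2 : 𝒪.comp 𝒪.mul 𝒪.one0 2 = 𝒪.one1) (p : 𝒪.O (n + 1)) :
    𝒪.del (𝒪.dd p) = -𝒪.pcast (by omega) (𝒪.dd (𝒪.del p)) := by
  have sign : (-1 : ℤ) ^ (n + 1 + 1) * (-1) ^ (n + 2) = 1 := by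
    rw [← pow_add]
    exact Even.neg_one_pow ⟨n + 2, by omega⟩
  rw [dd, dd]
  simp only [del_add, del_zsmul, del_pcast, del_sum, del_mul_comp_one _ hm2,
    del_mul_comp_two _ hm1, sum_del_degen _ hm1 hm2, pcast_add, pcast_sub, pcast_neg, pcast_zsmul,
    pcast_pcast]
  rw [smul_add, smul_smul, sign, one_smul]
  simp only [pow_succ (-1 : ℤ) (n + 1), mul_neg_one, neg_smul, Nat.add_sub_cancel]
  abel

end Boundary

end POperad

/-- on a simplicial right brace algebra (with `m ∘₁ 1₀ = 1_O = m ∘₂ 1₀`)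
the coboundary `d` and the boundary `∂` anticommute, `∂ ∘ d = - d ∘ ∂`; hence
`(O, ∂, d)` is a bicomplex with total differential `D = d + ∂`. -/
theorem boundary_coboundary_anticommute {K : Type} [Field K] (𝒪 : POperad K)
    (hm1 : 𝒪.comp 𝒪.mul 𝒪.one0 1 = 𝒪.one1)
    (hm2 : 𝒪.comp 𝒪.mul 𝒪.one0 2 = 𝒪.one1)
    (n : ℕ) (hn : 1 ≤ n) (p : 𝒪.O n) :
    𝒪.del (𝒪.dd p) = - 𝒪.pcast (by omega : n - 1 + 1 = n) (𝒪.dd (𝒪.del p)) := by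
  obtain ⟨m, rfl⟩ : ∃ m, n = m + 1 := ⟨n - 1, by omega⟩
  exact 𝒪.del_dd hm1 hm2 p
end

section
/- For σ ∈ Σ_n and 0 ≤ j ≤ n, let F̃_n^{n−j}(σ) = F_{j+1} ∘ ⋯ ∘ F_n(σ) and F̃_1^j(σ) = F_1 ∘ ⋯ ∘ F_1 (j times applied)(σ), where F_i deletes the i-th entry of one-line notation and standardizes. Then F̃_n^{n−j}(σ) = std(σ(1), …, σ(j)) and F̃_1^j(σ) = std(σ(j+1), …, σ(n)). Consequently the operadic Alexander–Whitney coproduct Δ(σ) = Σ_{j=0}^n F̃_n^{n−j}(σ) ⊗ F̃_1^j(σ) coincides with the Malvenuto–Reutenauer coproduct Δ_MR(σ) = Σ_{j=0}^n std(σ(1)⋯σ(j)) ⊗ std(σ(j+1)⋯σ(n)). -/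
/-! `std u` relabels the letters of `u` by `stdRank u`, which is strictly monotone on the letters
of `u`, and `std` only sees the relative order of letters; so deleting an entry commutes with
standardizing: `std ((std u).eraseIdx k) = std (u.eraseIdx k)`. Hence the top and bottom faces
intertwine `std` with `dropLast` and `tail`, their iterates on `std u` standardize prefixes and
suffixes of `u`, and a permutation word is its own standardization. -/

open scoped BigOperators TensorProduct

/-- Standardization of a word with distinct letters: the unique permutation
(in one-line notation) order-isomorphic to it: the entry at a position is
`1 +` the number of letters of the word smaller than the letter there. -/
def std (w : List ℕ) : List ℕ :=
  w.map (fun a => 1 + (w.filter (fun b => b < a)).length)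

/-- The face map `Fᵢ` (1-indexed): delete the `i`-th entry of the one-line
notation and standardize. -/
def faceStd (i : ℕ) (w : List ℕ) : List ℕ := std (w.eraseIdx (i - 1))

/-- Top face: delete the last entry and standardize (`F_n` on `Σ_n`). -/
def topFace (w : List ℕ) : List ℕ := std (w.eraseIdx (w.length - 1))

/-- Bottom face: delete the first entry and standardize (`F₁`). -/
def botFace (w : List ℕ) : List ℕ := std (w.eraseIdx 0)

def stdRank (u : List ℕ) (a : ℕ) : ℕ := 1 + (u.filter (· < a)).length

lemma std_eq_map_stdRank (u : List ℕ) : std u = u.map (stdRank u) := rfl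

lemma filter_lt_sublist_filter_lt (u : List ℕ) {a b : ℕ} (hab : a ≤ b) :
    (u.filter (· < a)).Sublist (u.filter (· < b)) :=
  List.monotone_filter_right u fun c hc => by simp only [decide_eq_true_eq] at hc ⊢; omega

lemma stdRank_mono (u : List ℕ) : Monotone (stdRank u) := fun a b hab => by
  simpa only [stdRank, add_le_add_iff_left] using (filter_lt_sublist_filter_lt u hab).length_le

lemma stdRank_lt_stdRank {u : List ℕ} {a b : ℕ} (hb : b ∈ u) (hba : b < a) :
    stdRank u b < stdRank u a := by
  have hsub := filter_lt_sublist_filter_lt u hba.le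
  have hne : (u.filter (· < b)).length ≠ (u.filter (· < a)).length := fun h => by
    have hmem : b ∈ u.filter (· < a) := List.mem_filter.2 ⟨hb, decide_eq_true hba⟩
    rw [← hsub.eq_of_length h] at hmem
    simp at hmem
  simpa only [stdRank, add_lt_add_iff_left] using lt_of_le_of_ne hsub.length_le hne

lemma stdRank_lt_stdRank_iff {u : List ℕ} {a b : ℕ} (hb : b ∈ u) :
    stdRank u b < stdRank u a ↔ b < a :=
  ⟨fun h => lt_of_not_ge fun hab => (stdRank_mono u hab).not_gt h, stdRank_lt_stdRank hb⟩

lemma length_std (u : List ℕ) : (std u).length = u.length := List.length_map _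

lemma std_map_of_lt_iff {u : List ℕ} {f : ℕ → ℕ} (hf : ∀ a ∈ u, ∀ b ∈ u, f b < f a ↔ b < a) :
    std (u.map f) = std u := by
  simp only [std, List.map_map, List.filter_map, List.length_map]
  refine List.map_congr_left fun a ha => ?_
  simp only [Function.comp_apply]
  congr 2
  exact List.filter_congr fun b hb => by simp only [Function.comp_apply, hf a ha b hb]

lemma std_eraseIdx_std (u : List ℕ) (k : ℕ) : std ((std u).eraseIdx k) = std (u.eraseIdx k) := by
  rw [std_eq_map_stdRank u, List.eraseIdx_map]
  exact std_map_of_lt_iff fun _ _ b hb => stdRank_lt_stdRank_iff (List.mem_of_mem_eraseIdx hb)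

lemma semiconj_std_dropLast_topFace : Function.Semiconj std List.dropLast topFace := fun u => by
  rw [topFace, length_std, std_eraseIdx_std, List.eraseIdx_length_sub_one]

lemma semiconj_std_tail_botFace : Function.Semiconj std List.tail botFace := fun u => by
  rw [botFace, std_eraseIdx_std, List.eraseIdx_zero]

lemma List.dropLast_iterate {α : Type*} (l : List α) (k : ℕ) :
    List.dropLast^[k] l = l.take (l.length - k) := by
  induction k with
  | zero => simp
  | succ k ih =>
    rw [Function.iterate_succ_apply', ih, List.dropLast_eq_take, List.length_take, List.take_take]
    congr 1
    omega

lemma topFace_iterate_std (u : List ℕ) (k : ℕ) :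
    topFace^[k] (std u) = std (u.take (u.length - k)) := by
  rw [← (semiconj_std_dropLast_topFace.iterate_right k).eq, List.dropLast_iterate]

lemma botFace_iterate_std (u : List ℕ) (j : ℕ) : botFace^[j] (std u) = std (u.drop j) := by
  rw [← (semiconj_std_tail_botFace.iterate_right j).eq, List.tail_iterate]

lemma std_of_perm_range' {n : ℕ} {w : List ℕ} (hperm : w.Perm (List.range' 1 n)) : std w = w := by
  refine (List.map_congr_left fun a ha => ?_).trans (List.map_id w)
  obtain ⟨ha1, han⟩ := List.mem_range'_1.1 (hperm.subset ha)
  have hIco : List.range' 1 n = List.Ico 1 (n + 1) := by simp [List.Ico]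
  rw [id, (hperm.filter _).length_eq, hIco, List.Ico.filter_lt, List.Ico.length]
  omega

/-- for `σ ∈ Σₙ` (one-line notation `w`), the iterated front faces
`F̃ₙ^{n-j}(σ) = F_{j+1} ∘ ⋯ ∘ Fₙ(σ)` equal `std(σ(1),…,σ(j))` and the iterated back
faces `F̃₁^j(σ)` equal `std(σ(j+1),…,σ(n))`; consequently the operadic
Alexander–Whitney coproduct `Δ(σ) = Σⱼ F̃ₙ^{n-j}σ ⊗ F̃₁^jσ` coincides with the
Malvenuto–Reutenauer coproduct `Δ_MR(σ) = Σⱼ std(σ(1)⋯σ(j)) ⊗ std(σ(j+1)⋯σ(n))`. -/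
theorem frontBack_std_and_AW_eq_MR (K : Type) [Field K] (n : ℕ) (w : List ℕ)
    (hw : w.length = n) (hperm : w.Perm (List.range' 1 n)) :
    (∀ j ≤ n, topFace^[n - j] w = std (w.take j) ∧ botFace^[j] w = std (w.drop j)) ∧
    (∑ j ∈ Finset.range (n + 1),
        (Finsupp.single (topFace^[n - j] w) (1 : K)) ⊗ₜ[K]
          (Finsupp.single (botFace^[j] w) (1 : K))
      = ∑ j ∈ Finset.range (n + 1),
        (Finsupp.single (std (w.take j)) (1 : K)) ⊗ₜ[K]
          (Finsupp.single (std (w.drop j)) (1 : K))) := by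
  have hstd : std w = w := std_of_perm_range' hperm
  have hfaces : ∀ j ≤ n, topFace^[n - j] w = std (w.take j) ∧ botFace^[j] w = std (w.drop j) :=
    fun j hj => by
      have htop := topFace_iterate_std w (n - j)
      have hbot := botFace_iterate_std w j
      rw [hstd, hw, Nat.sub_sub_self hj] at htop
      rw [hstd] at hbot
      exact ⟨htop, hbot⟩
  refine ⟨hfaces, Finset.sum_congr rfl fun j hj => ?_⟩
  obtain ⟨htop, hbot⟩ := hfaces j (Nat.lt_succ_iff.1 (Finset.mem_range.1 hj))
  rw [htop, hbot]
end

section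
/- Let E_n be strictly increasing n-tuples of positive integers with partial composition X ∘_i Y = (a₁, …, a_{i−1}, Y ⊕ (a_i − 1), (a_{i+1}, …, a_p) ⊕ (b_q − 1)) where ⊕ shifts all entries. Then for i < j, X ∈ E_n, Y ∈ E_m, Z ∈ E_l: (X ∘_j Z) ∘_i Y = (X ∘_i Y) ∘_{j+m−1} Z. -/
/-- The partial composition of the shift operad `E`: for `X = (a₁ < ⋯ < a_p)`,
`Y = (b₁ < ⋯ < b_q)` and `1 ≤ i ≤ p`,
`X ∘ᵢ Y = (a₁, …, a_{i-1}, b₁ + aᵢ - 1, …, b_q + aᵢ - 1,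
a_{i+1} + b_q - 1, …, a_p + b_q - 1)`
(with the convention that for `Y = ∅ ∈ E₀`, `b_q` is read as `0`). -/
def scomp (X Y : List ℤ) (i : ℕ) : List ℤ :=
  X.take (i - 1) ++ Y.map (fun b => b + X.getD (i - 1) 0 - 1)
    ++ (X.drop i).map (fun a => a + Y.getLastD 0 - 1)

/-- Membership in `E_n`: a strictly increasing `n`-tuple of positive integers. -/
def isShiftElt (X : List ℤ) : Prop := X.Chain' (· < ·) ∧ ∀ a ∈ X, 0 < a

/-- the parallel operadic axiom in the shift operad:
for `i < j`, `(X ∘ⱼ Z) ∘ᵢ Y = (X ∘ᵢ Y) ∘_{j+m-1} Z` where `m = |Y|`. -/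
theorem scomp_assoc_par (X Y Z : List ℤ)
    (hX : isShiftElt X) (hY : isShiftElt Y) (hZ : isShiftElt Z)
    (i j : ℕ) (hi : 1 ≤ i) (hij : i < j) (hjn : j ≤ X.length) :
    scomp (scomp X Z j) Y i = scomp (scomp X Y i) Z (j + Y.length - 1) := by
  clear hX hY hZ
  set m := Y.length with hm
  have hjX : j - 1 ≤ X.length := by omega
  have LA : (scomp X Z j).take (i-1) = X.take (i-1) := by
    unfold scomp
    rw [List.take_append_of_le_length (by simp; omega),
        List.take_append_of_le_length (by simp; omega),
        List.take_take, Nat.min_eq_left (by omega)]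
  have LB : (scomp X Z j).getD (i-1) 0 = X.getD (i-1) 0 := by
    simp only [scomp, List.getD_eq_getElem?_getD]
    rw [List.getElem?_append_left (by simp; omega),
        List.getElem?_append_left (by simp; omega),
        List.getElem?_take_of_lt (by omega)]
  have LC : (scomp X Z j).drop i = (X.drop i).take (j-1-i)
      ++ Z.map (fun b => b + X.getD (j-1) 0 - 1)
      ++ (X.drop j).map (fun a => a + Z.getLastD 0 - 1) := by
    unfold scomp
    rw [List.drop_append_of_le_length (by simp; omega),
        List.drop_append_of_le_length (by simp; omega),
        List.drop_take]
  have RA : (scomp X Y i).take (j+m-1-1) = X.take (i-1)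
      ++ Y.map (fun b => b + X.getD (i-1) 0 - 1)
      ++ ((X.drop i).map (fun a => a + Y.getLastD 0 - 1)).take (j-i-1) := by
    unfold scomp
    rw [List.take_append]
    congr 1
    · exact List.take_of_length_le (by simp; omega)
    · congr 1
      simp only [List.length_append, List.length_take, List.length_map]
      omega
  have RB : (scomp X Y i).getD (j+m-1-1) 0 = X.getD (j-1) 0 + Y.getLastD 0 - 1 := by
    have hlen : (X.take (i-1) ++ Y.map (fun b => b + X.getD (i-1) 0 - 1)).length = i - 1 + m := by
      simp only [List.length_append, List.length_take, List.length_map]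
      omega
    show ((X.take (i-1) ++ Y.map (fun b => b + X.getD (i-1) 0 - 1))
        ++ (X.drop i).map (fun a => a + Y.getLastD 0 - 1)).getD (j+m-1-1) 0 = _
    rw [List.getD_eq_getElem?_getD, List.getElem?_append_right (by rw [hlen]; omega), hlen,
        show j+m-1-1-(i-1+m) = j-1-i by omega,
        List.getElem?_map, List.getElem?_drop, show i + (j-1-i) = j-1 by omega,
        List.getElem?_eq_getElem (by omega : j-1 < X.length)]
    simp [List.getD_eq_getElem?_getD, List.getElem?_eq_getElem (show j-1 < X.length by omega)]
  have RC : (scomp X Y i).drop (j+m-1)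
      = (X.drop j).map (fun a => a + Y.getLastD 0 - 1) := by
    unfold scomp
    rw [List.drop_append,
        List.drop_eq_nil_of_le (by simp; omega), List.nil_append,
        ← List.map_drop, List.drop_drop,
        show (j + m - 1 - (X.take (i-1) ++ Y.map (fun b => b + X.getD (i-1) 0 - 1)).length)
          = j - i by simp only [List.length_append, List.length_take, List.length_map]; omega,
        show i + (j - i) = j by omega]
  show (scomp X Z j).take (i-1)
      ++ Y.map (fun b => b + (scomp X Z j).getD (i-1) 0 - 1)
      ++ ((scomp X Z j).drop i).map (fun a => a + Y.getLastD 0 - 1)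
    = (scomp X Y i).take (j+m-1-1)
      ++ Z.map (fun b => b + (scomp X Y i).getD (j+m-1-1) 0 - 1)
      ++ ((scomp X Y i).drop (j+m-1)).map (fun a => a + Z.getLastD 0 - 1)
  rw [LA, LB, LC, RA, RB, RC, show j - 1 - i = j - i - 1 from by omega]
  simp only [List.map_append, List.map_map, List.append_assoc, List.map_take]
  have f1 : ((fun a : ℤ => a + Y.getLastD 0 - 1) ∘ fun b => b + X.getD (j - 1) 0 - 1)
      = fun b => b + (X.getD (j - 1) 0 + Y.getLastD 0 - 1) - 1 := by
    funext z; simp only [Function.comp_apply]; ring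
  have f2 : ((fun a : ℤ => a + Y.getLastD 0 - 1) ∘ fun a => a + Z.getLastD 0 - 1)
      = ((fun a : ℤ => a + Z.getLastD 0 - 1) ∘ fun a => a + Y.getLastD 0 - 1) := by
    funext a; simp only [Function.comp_apply]; ring
  rw [f1, f2]
end

section
/- Let O be an operad with partial compositions and face maps F_i(p) = p ∘_i 1₀. For s ≥ 1 and p ∈ O(t₁ + ⋯ + t_s), define F_{j₁+⋯+j_s}^{t₁+⋯+t_s}(p) as the iterated insertion of 1₀ at positions j_s + Σ_{r<s} t_r, …, t₁ + j₂, j₁ (from innermost to outermost, in decreasing position order). Then for p ∈ O(s) and q_r ∈ O(t_r), F_{j₁+⋯+j_s}^{t₁+⋯+t_s}(γ(p; q₁, …, q_s)) = γ(p; F_{j₁}(q₁), …, F_{j_s}(q_s)), i.e., faces applied after operadic composition equal the composition of individually faced inputs (up to the stated Koszul sign (−1)^{ε_s} when working with graded signs, ε_s = Σ_r t_r(s−r)). -/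
open scoped BigOperators TensorProduct

/-- Partial composition on arity-tagged elements. -/
def POperad.compS {K : Type} [Field K] (𝒪 : POperad K)
    (x : (a : ℕ) × 𝒪.O a) (y : (b : ℕ) × 𝒪.O b) (i : ℕ) : (c : ℕ) × 𝒪.O c :=
  ⟨x.1 + y.1 - 1, 𝒪.comp x.2 y.2 i⟩

/-- The operadic composition `γ(x; y₁, …, y_s) = (⋯((x ∘_s y_s) ∘_{s-1} y_{s-1}) ⋯) ∘₁ y₁`
built from partial compositions, on arity-tagged elements. -/
def POperad.gamS {K : Type} [Field K] (𝒪 : POperad K) :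
    {s : ℕ} → (t : Fin s → ℕ) → ((c : ℕ) × 𝒪.O c) → (∀ r, 𝒪.O (t r)) →
      (c : ℕ) × 𝒪.O c
  | 0, _, x, _ => x
  | s + 1, t, x, q =>
      𝒪.gamS (fun r : Fin s => t r.castSucc)
        (𝒪.compS x ⟨t (Fin.last s), q (Fin.last s)⟩ (s + 1))
        (fun r => q r.castSucc)

/-- Iterated insertion of `1₀` at the prescribed positions (`pos 0` is applied
last, i.e. outermost). -/
def POperad.multiFaceS {K : Type} [Field K] (𝒪 : POperad K) :
    (k : ℕ) → (pos : Fin k → ℕ) → ((c : ℕ) × 𝒪.O c) → (c : ℕ) × 𝒪.O c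
  | 0, _, x => x
  | k + 1, pos, x =>
      𝒪.compS (𝒪.multiFaceS k (fun r => pos r.succ) x) ⟨0, 𝒪.one0⟩ (pos 0)

/-!
Induct on `s`, peeling off the innermost face, at position `j_s + ∑_{r<s} t_r`: it lands
inside the last input `q_s`, which `γ` inserts first. This face lies beyond the slots still
to be filled by `q_1, …, q_{s-1}`, so it commutes with those compositions (parallel
associativity); it is then absorbed into `q_s` by sequential associativity, turning `q_s`
into `F_{j_s}(q_s)`.
-/

theorem Fin.sum_eq_add_sum_tsub_one {s : ℕ} (f : Fin s → ℕ) (hf : ∀ r, 1 ≤ f r) :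
    ∑ r, f r = s + ∑ r, (f r - 1) :=
  calc ∑ r, f r = ∑ r, ((f r - 1) + 1) := Finset.sum_congr rfl fun r _ => by have := hf r; omega
    _ = s + ∑ r, (f r - 1) := by simp [Finset.sum_add_distrib, add_comm]

namespace POperad

variable {K : Type} [Field K] (𝒪 : POperad K)

lemma compS_assoc_seq {p q r : ℕ} (x : 𝒪.O p) (y : 𝒪.O q) (z : 𝒪.O r) {i j : ℕ}
    (hi : 1 ≤ i) (hip : i ≤ p) (hj : 1 ≤ j) (hjq : j ≤ q) :
    𝒪.compS (𝒪.compS ⟨p, x⟩ ⟨q, y⟩ i) ⟨r, z⟩ (j + i - 1)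
      = 𝒪.compS ⟨p, x⟩ (𝒪.compS ⟨q, y⟩ ⟨r, z⟩ j) i :=
  Sigma.ext (by simp only [compS]; omega) (𝒪.assoc_seq x y z i j hi hip hj hjq)

lemma compS_assoc_par {p q r : ℕ} (x : 𝒪.O p) (y : 𝒪.O q) (z : 𝒪.O r) {i j : ℕ}
    (hi : 1 ≤ i) (hij : i < j) (hjp : j ≤ p) :
    𝒪.compS (𝒪.compS ⟨p, x⟩ ⟨q, y⟩ i) ⟨r, z⟩ (j + q - 1)
      = 𝒪.compS (𝒪.compS ⟨p, x⟩ ⟨r, z⟩ j) ⟨q, y⟩ i :=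
  Sigma.ext (by simp only [compS]; omega) (𝒪.assoc_par x y z i j hi hij hjp)

lemma multiFaceS_succ' : ∀ (k : ℕ) (pos : Fin (k + 1) → ℕ) (x : (c : ℕ) × 𝒪.O c),
    𝒪.multiFaceS (k + 1) pos x
      = 𝒪.multiFaceS k (fun r => pos r.castSucc) (𝒪.compS x ⟨0, 𝒪.one0⟩ (pos (Fin.last k)))
  | 0, _, _ => rfl
  | k + 1, pos, x => by
    rw [multiFaceS, multiFaceS_succ' k, multiFaceS]
    simp only [Fin.succ_last, Fin.succ_castSucc, Fin.castSucc_zero]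

/-- Each input `q r` changes the arity by `t r - 1`, which shifts a face lying beyond
the slots being filled. -/
lemma compS_one0_gamS {s : ℕ} (t : Fin s → ℕ) (ht : ∀ r, 1 ≤ t r) (q : ∀ r, 𝒪.O (t r))
    (x : (c : ℕ) × 𝒪.O c) {i : ℕ} (hsi : s < i) (hix : i ≤ x.1) :
    𝒪.compS (𝒪.gamS t x q) ⟨0, 𝒪.one0⟩ (i + ∑ r, (t r - 1))
      = 𝒪.gamS t (𝒪.compS x ⟨0, 𝒪.one0⟩ i) q := by
  induction s generalizing x i with
  | zero => simp [gamS]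
  | succ s ih =>
    obtain ⟨a, x⟩ := x
    dsimp only at hix
    have hlast := ht (Fin.last s)
    have hpos : i + ∑ r, (t r - 1) = (i + t (Fin.last s) - 1) + ∑ r : Fin s, (t r.castSucc - 1) := by
      rw [Fin.sum_univ_castSucc]; omega
    rw [hpos, gamS, ih _ (fun r => ht r.castSucc) _ _ (by omega) (by simp only [compS]; omega),
      𝒪.compS_assoc_par x _ _ (by omega) hsi hix]
    rfl

theorem multiFaceS_gamS {s : ℕ} (t j : Fin s → ℕ) (hj : ∀ r, 1 ≤ j r ∧ j r ≤ t r)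
    (x : (c : ℕ) × 𝒪.O c) (hsx : s ≤ x.1) (q : ∀ r, 𝒪.O (t r)) :
    𝒪.multiFaceS s (fun r => j r + ∑ r' < r, t r') (𝒪.gamS t x q)
      = 𝒪.gamS (fun r => t r - 1) x (fun r => 𝒪.comp (q r) 𝒪.one0 (j r)) := by
  induction s generalizing x with
  | zero => rfl
  | succ s ih =>
    obtain ⟨a, x⟩ := x
    dsimp only at hsx
    have ht : ∀ r, 1 ≤ t r := fun r => (hj r).1.trans (hj r).2
    obtain ⟨hj₁, hjt⟩ := hj (Fin.last s)
    have hpos : j (Fin.last s) + ∑ r' < Fin.last s, t r'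
        = (j (Fin.last s) + s) + ∑ r : Fin s, (t r.castSucc - 1) := by
      rw [Fin.Iio_last_eq_map, Finset.sum_map]
      simp only [Fin.castSuccEmb_apply]
      rw [Fin.sum_eq_add_sum_tsub_one _ fun r => ht r.castSucc, add_assoc]
    rw [multiFaceS_succ', hpos, gamS, 𝒪.compS_one0_gamS _ (fun r => ht r.castSucc) _ _ (by omega)
        (by simp only [compS]; omega),
      show j (Fin.last s) + s = j (Fin.last s) + (s + 1) - 1 by omega,
      𝒪.compS_assoc_seq x _ _ (by omega) hsx hj₁ hjt]
    simp only [Fin.sum_Iio_castSucc]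
    exact ih _ _ (fun r => hj r.castSucc) _ (by simp only [compS]; omega) _

end POperad

/-- for `p ∈ O(s)` and `q_r ∈ O(t_r)`, the iterated face
`F_{j₁+⋯+j_s}^{t₁+⋯+t_s}` (inserting `1₀` at positions `j_r + Σ_{r'<r} t_{r'}`,
innermost first in decreasing position order) applied to `γ(p; q₁, …, q_s)`
equals `γ(p; F_{j₁}(q₁), …, F_{j_s}(q_s))`: the two Koszul signs `(-1)^{ε_s}`
(with `ε_s = Σ_r t_r (s - r)`) cancel. -/
theorem multiFace_gamma {K : Type} [Field K] (𝒪 : POperad K)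
    (s : ℕ) (t : Fin s → ℕ) (j : Fin s → ℕ)
    (hj : ∀ r, 1 ≤ j r ∧ j r ≤ t r)
    (p : 𝒪.O s) (q : ∀ r, 𝒪.O (t r)) :
    𝒪.multiFaceS s
        (fun r => j r + ∑ r' ∈ Finset.univ.filter (fun r' : Fin s => r' < r), t r')
        (𝒪.gamS t ⟨s, p⟩ q)
      = 𝒪.gamS (fun r => t r - 1) ⟨s, p⟩
          (fun r => 𝒪.comp (q r) 𝒪.one0 (j r)) := by
  simpa only [Finset.filter_gt_eq_Iio] using 𝒪.multiFaceS_gamS t j hj ⟨s, p⟩ le_rfl q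
end
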